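/- Fix x ∈ ℝ and c > 0, and set σ_n² = n^{−c}. Let E_1, E_2 be i.i.d. exponential random variables with mean one. Then there exists a positive constant K = K(x) such that for all n ≥ 2, P((E_1 E_2)^{1/4} > (1 + σ_n²)^{−1/2} (c_n x + d_n)) ≤ K/n, where c_n = (8 log n)^{−1/2} and d_n = (log n)^{1/2}/√2 · (1 + (1/4)(log log n)/(log n)) + (1/(2(8 log n)^{1/2})) · log(π/2). -/

import Mathlib

/-!
Conditioning on `E₁ = y` gives `P(E₁E₂ > t⁴) = ∫₀^∞ exp(-(y + t⁴/y)) dy`. Since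
`y + t⁴/y = 2t² + (y - t²)²/y`, the integrand is dominated by `e^{-2t²}` times a Gaussian of
variance `2t²` on `(0, 4t²]` and by `e^{-y}` beyond, so the probability is at most
`(2√π t + 1) e^{-2t²}`. The level `t_n = (1 + σ_n²)^{-1/2}(c_n x + d_n)` satisfies
`2t_n² ≥ log n + (log log n)/2 - O(1)` and `t_n ≤ √(log n)`, which turns this bound into
`O(1/n)`.
-/

open MeasureTheory ProbabilityTheory Real Set Filter
open scoped ENNReal Topology

/-- The Gumbel scaling constant `c_n = (8 log n)^{−1/2}`. -/
noncomputable def cGum (n : ℕ) : ℝ := (Real.sqrt (8 * Real.log n))⁻¹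

/-- The Gumbel centering constant
`d_n = (log n)^{1/2}/√2 · (1 + (1/4)(log log n)/(log n)) + (2(8 log n)^{1/2})⁻¹ log(π/2)`. -/
noncomputable def dGum (n : ℕ) : ℝ :=
  Real.sqrt (Real.log n) / Real.sqrt 2 *
      (1 + (1 / 4) * Real.log (Real.log n) / Real.log n) +
    (1 / (2 * Real.sqrt (8 * Real.log n))) * Real.log (Real.pi / 2)

lemma lintegral_expMeasure {r : ℝ} {f : ℝ → ℝ≥0∞} (hf : Measurable f) :
    ∫⁻ y, f y ∂expMeasure r =
      ∫⁻ y in Ioi 0, ENNReal.ofReal (r * exp (-(r * y))) * f y := by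
  have hpdf : gammaPDF 1 r * f =
      (Ici 0).indicator fun y ↦ ENNReal.ofReal (r * exp (-(r * y))) * f y := by
    ext y
    by_cases hy : 0 ≤ y
    · simp [indicator_of_mem (mem_Ici.2 hy), ← exponentialPDF_of_nonneg hy, exponentialPDF]
      rfl
    · simp [indicator_of_notMem (notMem_Ici.2 (not_le.1 hy)), gammaPDF_of_neg (not_le.1 hy)]
  rw [expMeasure, gammaMeasure, lintegral_withDensity_eq_lintegral_mul volume
    (f := gammaPDF 1 r) (measurable_gammaPDFReal 1 r).ennreal_ofReal hf, hpdf,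
    lintegral_indicator measurableSet_Ici, setLIntegral_congr Ioi_ae_eq_Ici]

lemma lintegral_exp_neg_Ioi (a : ℝ) :
    ∫⁻ y in Ioi a, ENNReal.ofReal (exp (-y)) = ENNReal.ofReal (exp (-a)) := by
  rw [← ofReal_integral_eq_lintegral_ofReal (exp_neg_integrableOn_Ioi a one_pos |>.congr_fun
    (fun y _ ↦ by simp) measurableSet_Ioi) (.of_forall fun y ↦ (exp_pos _).le),
    integral_exp_neg_Ioi]

lemma expMeasure_one_Ioi {a : ℝ} (ha : 0 ≤ a) :
    expMeasure 1 (Ioi a) = ENNReal.ofReal (exp (-a)) := by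
  rw [expMeasure, gammaMeasure, withDensity_apply _ measurableSet_Ioi, ← lintegral_exp_neg_Ioi]
  refine setLIntegral_congr_fun measurableSet_Ioi fun y hy ↦ ?_
  exact (exponentialPDF_of_nonneg (ha.trans (le_of_lt hy))).trans (by simp)

lemma ae_nonneg_expMeasure (r : ℝ) : ∀ᵐ y ∂expMeasure r, 0 ≤ y := by
  simp only [ae_iff, not_le]
  change expMeasure r (Iio 0) = 0
  rw [expMeasure, gammaMeasure, withDensity_apply _ measurableSet_Iio]
  exact lintegral_gammaPDF_of_nonpos le_rfl

instance isProbabilityMeasure_expMeasure_one : IsProbabilityMeasure (expMeasure 1) :=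
  isProbabilityMeasure_expMeasure one_pos

lemma prod_expMeasure_one_lt_mul {s : ℝ} (hs : 0 < s) :
    ((expMeasure 1).prod (expMeasure 1)) {p : ℝ × ℝ | s < p.1 * p.2} =
      ∫⁻ y in Ioi 0, ENNReal.ofReal (exp (-y)) * ENNReal.ofReal (exp (-(s / y))) := by
  have hS : MeasurableSet {p : ℝ × ℝ | s < p.1 * p.2} :=
    measurableSet_lt measurable_const (by fun_prop)
  rw [Measure.prod_apply hS, lintegral_expMeasure (measurable_measure_prodMk_left hS)]
  refine setLIntegral_congr_fun measurableSet_Ioi fun y (hy : 0 < y) ↦ ?_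
  have hsection : Prod.mk y ⁻¹' {p : ℝ × ℝ | s < p.1 * p.2} = Ioi (s / y) := by
    ext z
    simp [div_lt_iff₀ hy, mul_comm]
  rw [hsection, expMeasure_one_Ioi (by positivity), one_mul, one_mul]

lemma lintegral_exp_neg_mul_sub_sq {b : ℝ} (hb : 0 < b) (m : ℝ) :
    ∫⁻ y, ENNReal.ofReal (exp (-b * (y - m) ^ 2)) = ENNReal.ofReal √(π / b) := by
  rw [← ofReal_integral_eq_lintegral_ofReal ((integrable_exp_neg_mul_sq hb).comp_sub_right m)
    (.of_forall fun y ↦ (exp_pos _).le),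
    integral_sub_right_eq_self (fun y ↦ exp (-b * y ^ 2)), integral_gaussian]

lemma exp_neg_add_div_le {t y : ℝ} (hy : 0 < y) (hyt : y ≤ 4 * t ^ 2) :
    exp (-y) * exp (-(t ^ 4 / y)) ≤
      exp (-(2 * t ^ 2)) * exp (-(4 * t ^ 2)⁻¹ * (y - t ^ 2) ^ 2) := by
  rw [← exp_add, ← exp_add, exp_le_exp]
  have hsq : y + t ^ 4 / y = 2 * t ^ 2 + (y - t ^ 2) ^ 2 / y := by field_simp; ring
  have : (y - t ^ 2) ^ 2 / (4 * t ^ 2) ≤ (y - t ^ 2) ^ 2 / y := by gcongr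
  rw [neg_mul, ← div_eq_inv_mul]
  linarith

lemma sqrt_pi_div_inv_four_mul_sq {t : ℝ} (ht : 0 ≤ t) :
    √(π / (4 * t ^ 2)⁻¹) = 2 * √π * t := by
  rw [div_inv_eq_mul, mul_comm, show 4 * t ^ 2 = (2 * t) ^ 2 by ring, sqrt_mul (by positivity),
    sqrt_sq (by positivity)]
  ring

lemma lintegral_exp_neg_add_div_le {t : ℝ} (ht : 0 < t) :
    ∫⁻ y in Ioi 0, ENNReal.ofReal (exp (-y)) * ENNReal.ofReal (exp (-(t ^ 4 / y))) ≤
      ENNReal.ofReal ((2 * √π * t + 1) * exp (-(2 * t ^ 2))) := by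
  have hm : 0 < 4 * t ^ 2 := by positivity
  have hnear : ∫⁻ y in Ioc 0 (4 * t ^ 2),
      ENNReal.ofReal (exp (-y)) * ENNReal.ofReal (exp (-(t ^ 4 / y))) ≤
        ENNReal.ofReal (exp (-(2 * t ^ 2)) * (2 * √π * t)) := calc
    _ ≤ ∫⁻ y in Ioc 0 (4 * t ^ 2), ENNReal.ofReal (exp (-(2 * t ^ 2)) *
          exp (-(4 * t ^ 2)⁻¹ * (y - t ^ 2) ^ 2)) := by
        refine setLIntegral_mono (by fun_prop) fun y hy ↦ ?_
        rw [← ENNReal.ofReal_mul (exp_pos _).le]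
        exact ENNReal.ofReal_le_ofReal (exp_neg_add_div_le hy.1 hy.2)
    _ ≤ ∫⁻ y, ENNReal.ofReal (exp (-(2 * t ^ 2)) *
          exp (-(4 * t ^ 2)⁻¹ * (y - t ^ 2) ^ 2)) :=
        setLIntegral_le_lintegral _ _
    _ = _ := by
        simp_rw [ENNReal.ofReal_mul (exp_pos _).le]
        rw [lintegral_const_mul _ (by fun_prop), lintegral_exp_neg_mul_sub_sq (by positivity),
          sqrt_pi_div_inv_four_mul_sq ht.le]
  have hfar : ∫⁻ y in Ioi (4 * t ^ 2),
      ENNReal.ofReal (exp (-y)) * ENNReal.ofReal (exp (-(t ^ 4 / y))) ≤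
        ENNReal.ofReal (exp (-(4 * t ^ 2))) := calc
    _ ≤ ∫⁻ y in Ioi (4 * t ^ 2), ENNReal.ofReal (exp (-y)) := by
        refine setLIntegral_mono (by fun_prop) fun y (hy : _ < y) ↦ ?_
        refine mul_le_of_le_one_right' (ENNReal.ofReal_le_one.2 (exp_le_one_iff.2 ?_))
        have : 0 ≤ t ^ 4 / y := div_nonneg (by positivity) (hm.trans hy).le
        linarith
    _ = _ := lintegral_exp_neg_Ioi _
  rw [← Ioc_union_Ioi_eq_Ioi hm.le, lintegral_union measurableSet_Ioi Ioc_disjoint_Ioi_same]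
  refine (add_le_add hnear hfar).trans ?_
  rw [← ENNReal.ofReal_add (by positivity) (by positivity)]
  refine ENNReal.ofReal_le_ofReal ?_
  have : exp (-(4 * t ^ 2)) ≤ exp (-(2 * t ^ 2)) := exp_le_exp.2 (by nlinarith)
  linarith

lemma prod_expMeasure_one_lt_rpow_le {t : ℝ} (ht : 0 < t) :
    ((expMeasure 1).prod (expMeasure 1)) {p : ℝ × ℝ | t < (p.1 * p.2) ^ ((1 : ℝ) / 4)} ≤
      ENNReal.ofReal ((2 * √π * t + 1) * exp (-(2 * t ^ 2))) := by
  have hnonneg : ∀ᵐ p ∂(expMeasure 1).prod (expMeasure 1), 0 ≤ p.1 ∧ 0 ≤ p.2 :=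
    (Measure.quasiMeasurePreserving_fst.ae (ae_nonneg_expMeasure 1)).and
      (Measure.quasiMeasurePreserving_snd.ae (ae_nonneg_expMeasure 1))
  calc _ ≤ ((expMeasure 1).prod (expMeasure 1)) {p : ℝ × ℝ | t ^ 4 < p.1 * p.2} := by
        refine measure_mono_ae (hnonneg.mono fun p ⟨h₁, h₂⟩ (hp : t < _) ↦ ?_)
        have := (lt_rpow_inv_iff_of_pos ht.le (mul_nonneg h₁ h₂) four_pos).1
          (by simpa [one_div] using hp)
        exact_mod_cast this
    _ = _ := prod_expMeasure_one_lt_mul (by positivity)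
    _ ≤ _ := lintegral_exp_neg_add_div_le ht

-- The shape of `c_n x + d_n`, with `q = √(log n / 2)` and `√(8 log n) = 4q`.
lemma affine_level_bounds {q a ℓ x : ℝ} (hq : 13 ≤ q) (ha₀ : 0 ≤ a) (ha : a ≤ 1 / 4)
    (hℓ₀ : 0 ≤ ℓ) (hℓ : ℓ ≤ 1) (hx : x ^ 2 ≤ 2 * q ^ 2) :
    let u := (4 * q)⁻¹ * x + (q * (1 + a) + 1 / (2 * (4 * q)) * ℓ)
    6 ≤ u ∧ u ^ 2 ≤ 2 * q ^ 2 ∧ q ^ 2 + 2 * q ^ 2 * a - |x| ≤ u ^ 2 := by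
  intro u
  have hq₀ : 0 < q := by linarith
  have hxq : |x| ≤ 3 / 2 * q := by nlinarith [sq_abs x, abs_nonneg x]
  set z := |x| / (4 * q) with hz
  have hz₀ : 0 ≤ z := by positivity
  have hz_le : z ≤ 3 / 8 := by rw [hz, div_le_iff₀ (by positivity)]; linarith
  have hqz : q * z = |x| / 4 := by rw [hz]; field_simp
  set e := (x + ℓ / 2) / (4 * q) with he
  have hu : u = q * (1 + a) + e := by simp only [u, e]; field_simp; ring
  have he_lower : -z ≤ e := by
    rw [he, hz, ← neg_div]
    gcongr
    linarith [neg_abs_le x]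
  have he_upper : e ≤ z + 1 / 8 := by
    rw [he, hz, div_add' _ _ _ (by positivity), div_le_div_iff_of_pos_right (by positivity)]
    linarith [le_abs_self x]
  have hu_lower : q * (1 + a) - z ≤ u := by linarith
  have hu_upper : u ≤ 5 / 4 * q + 1 / 2 := by nlinarith
  have hu_six : 6 ≤ u := by nlinarith
  refine ⟨hu_six, ?_, ?_⟩
  · nlinarith [pow_le_pow_left₀ (by linarith) hu_upper 2]
  · have hexpand : (q * (1 + a) - z) ^ 2 =
        q ^ 2 + 2 * q ^ 2 * a - (1 + a) * |x| / 2 + (q * a) ^ 2 + z ^ 2 := by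
      linear_combination (-2 * (1 + a)) * hqz
    nlinarith [pow_le_pow_left₀ (by nlinarith) hu_lower 2, mul_nonneg ha₀ (abs_nonneg x),
      sq_nonneg (q * a), sq_nonneg z]

lemma sqrt_eight_mul (L : ℝ) : √(8 * L) = 4 * (√L / √2) := by
  have h8 : √8 = 4 / √2 := by
    rw [eq_div_iff (by positivity), ← sqrt_mul (by norm_num),
      show (8 : ℝ) * 2 = 4 ^ 2 by norm_num, sqrt_sq (by norm_num)]
  rw [sqrt_mul (by norm_num), h8]
  ring

lemma cGum_mul_add_dGum_bounds {n : ℕ} {x : ℝ} (hn : 400 ≤ log n) (hx : x ^ 2 ≤ log n) :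
    6 ≤ cGum n * x + dGum n ∧ (cGum n * x + dGum n) ^ 2 ≤ log n ∧
      log n / 2 + log (log n) / 4 - |x| ≤ (cGum n * x + dGum n) ^ 2 := by
  set L := log n
  set q := √L / √2
  have hq : 2 * q ^ 2 = L := by
    rw [div_pow, sq_sqrt (by linarith), sq_sqrt zero_le_two]
    ring
  have hq₁₃ : 13 ≤ q := by nlinarith [show 0 ≤ q by positivity]
  have hlogL : 0 ≤ log L := log_nonneg (by linarith)
  have ha : 1 / 4 * log L / L ≤ 1 / 4 := by
    rw [div_le_iff₀ (by linarith)]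
    linarith [log_le_self (by linarith : 0 ≤ L)]
  have hπ : log (π / 2) ≤ 1 := by
    linarith [log_le_sub_one_of_pos (by positivity : 0 < π / 2), pi_le_four]
  obtain ⟨hu₆, hu_le, hu_ge⟩ := affine_level_bounds hq₁₃ (by positivity) ha
    (log_nonneg (by linarith [pi_gt_three])) hπ (hx.trans hq.ge)
  have hu : cGum n * x + dGum n =
      (4 * q)⁻¹ * x + (q * (1 + 1 / 4 * log L / L) + 1 / (2 * (4 * q)) * log (π / 2)) := by
    rw [cGum, dGum, sqrt_eight_mul]
  have ha' : 2 * q ^ 2 * (1 / 4 * log L / L) = log L / 4 := by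
    rw [hq]; field_simp
  rw [hu]
  exact ⟨hu₆, hq ▸ hu_le, by linarith⟩

lemma eventually_rpow_neg_mul_log_le_one {c : ℝ} (hc : 0 < c) :
    ∀ᶠ n : ℕ in atTop, (n : ℝ) ^ (-c) * log n ≤ 1 := by
  have hlog := ((isLittleO_log_rpow_atTop hc).bound one_pos).and (eventually_gt_atTop 0)
  filter_upwards [tendsto_natCast_atTop_atTop.eventually hlog] with n ⟨hn, hn₀⟩
  rw [one_mul, norm_of_nonneg (rpow_nonneg hn₀.le _)] at hn
  rw [rpow_neg hn₀.le, inv_mul_le_iff₀ (rpow_pos_of_pos hn₀ _), mul_one]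
  exact (le_abs_self _).trans hn

lemma sq_rpow_inv_one_add_mul {σ : ℝ} (hσ : 0 ≤ σ) (u : ℝ) :
    ((1 + σ)⁻¹ ^ ((1 : ℝ) / 2) * u) ^ 2 = u ^ 2 / (1 + σ) := by
  rw [← sqrt_eq_rpow, mul_pow, sq_sqrt (by positivity), inv_mul_eq_div]

lemma rpow_inv_one_add_mul_le {σ u : ℝ} (hσ : 0 ≤ σ) (hu : 0 ≤ u) :
    (1 + σ)⁻¹ ^ ((1 : ℝ) / 2) * u ≤ u := by
  refine mul_le_of_le_one_left hu (rpow_le_one (by positivity) (inv_le_one_of_one_le₀ ?_) ?_)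
  all_goals linarith

noncomputable def gumbelLevel (x c : ℝ) (n : ℕ) : ℝ :=
  (1 + (n : ℝ) ^ (-c))⁻¹ ^ ((1 : ℝ) / 2) * (cGum n * x + dGum n)

lemma eventually_gumbelLevel_bounds (x : ℝ) {c : ℝ} (hc : 0 < c) :
    ∀ᶠ n : ℕ in atTop, 1 ≤ gumbelLevel x c n ∧ gumbelLevel x c n ≤ √(log n) ∧
      log n + log (log n) / 2 - 2 * (|x| + 1) ≤ 2 * gumbelLevel x c n ^ 2 := by
  have hlog : Tendsto (fun n : ℕ ↦ log n) atTop atTop :=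
    tendsto_log_atTop.comp tendsto_natCast_atTop_atTop
  filter_upwards [hlog.eventually_ge_atTop 400, hlog.eventually_ge_atTop (x ^ 2),
    eventually_rpow_neg_mul_log_le_one hc] with n hn hx hσ
  obtain ⟨hu₆, hu_le, hu_ge⟩ := cGum_mul_add_dGum_bounds hn hx
  set u := cGum n * x + dGum n
  set σ := (n : ℝ) ^ (-c)
  have hσ₀ : 0 ≤ σ := rpow_nonneg (Nat.cast_nonneg n) _
  have ht : gumbelLevel x c n ^ 2 = u ^ 2 / (1 + σ) := sq_rpow_inv_one_add_mul hσ₀ u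
  have ht_ge : u ^ 2 - 1 ≤ gumbelLevel x c n ^ 2 := by
    rw [ht, le_div_iff₀ (by positivity)]
    nlinarith [mul_le_mul_of_nonneg_left hu_le hσ₀]
  have ht₀ : 0 ≤ gumbelLevel x c n := mul_nonneg (by positivity) (by linarith)
  refine ⟨by nlinarith, ?_, by linarith⟩
  exact (rpow_inv_one_add_mul_le hσ₀ (by linarith)).trans (le_sqrt_of_sq_le hu_le)

lemma mul_exp_neg_two_mul_sq_le_div {n : ℕ} {t B : ℝ} (hn : 0 < n) (ht : 1 ≤ t)
    (htL : t ≤ √(log n)) (hlow : log n + log (log n) / 2 - B ≤ 2 * t ^ 2) :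
    (2 * √π * t + 1) * exp (-(2 * t ^ 2)) ≤ (2 * √π + 1) * exp B / n := by
  set L := log n
  have hs : 0 < √L := by linarith
  have hL : 0 < L := sqrt_pos.1 hs
  have hexp : exp (-(2 * t ^ 2)) ≤ exp B / (n * √L) := calc
    exp (-(2 * t ^ 2)) ≤ exp (B - L - log √L) := exp_le_exp.2 (by rw [log_sqrt hL.le]; linarith)
    _ = exp B / (n * √L) := by
      rw [exp_sub, exp_sub, exp_log (Nat.cast_pos.2 hn), exp_log hs, div_div]
  calc (2 * √π * t + 1) * exp (-(2 * t ^ 2))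
      ≤ ((2 * √π + 1) * √L) * (exp B / (n * √L)) :=
        mul_le_mul (by nlinarith [sqrt_nonneg π]) hexp (exp_pos _).le (by positivity)
    _ = (2 * √π + 1) * exp B / n := by field_simp

/-- For fixed `x ∈ ℝ`, `c > 0` and `σ_n² = n^{−c}`, there is a constant `K = K(x) > 0`
with `P((E₁E₂)^{1/4} > (1 + σ_n²)^{−1/2}(c_n x + d_n)) ≤ K/n` for all `n ≥ 2`,
where `E₁, E₂` are i.i.d. mean-one exponentials. -/
theorem stmt19 (x : ℝ) (c : ℝ) (hc : 0 < c) :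
    ∃ K : ℝ, 0 < K ∧ ∀ n : ℕ, 2 ≤ n →
      (((expMeasure 1).prod (expMeasure 1))
          {p : ℝ × ℝ | (1 + (n : ℝ) ^ (-c))⁻¹ ^ ((1 : ℝ) / 2) * (cGum n * x + dGum n)
              < (p.1 * p.2) ^ ((1 : ℝ) / 4)}).toReal ≤ K / n := by
  obtain ⟨N, hN⟩ := eventually_atTop.1 (eventually_gumbelLevel_bounds x hc)
  set K₀ := (2 * √π + 1) * exp (2 * (|x| + 1))
  have hK₀ : 0 < K₀ := by positivity
  refine ⟨K₀ + N, by positivity, fun n hn ↦ ?_⟩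
  have hn₀ : (0 : ℝ) < n := Nat.cast_pos.2 (by omega)
  rcases le_or_gt N n with hNn | hnN
  · obtain ⟨ht₁, htL, ht⟩ := hN n hNn
    calc _ ≤ (2 * √π * gumbelLevel x c n + 1) * exp (-(2 * gumbelLevel x c n ^ 2)) :=
          ENNReal.toReal_le_of_le_ofReal (by positivity)
            (prod_expMeasure_one_lt_rpow_le (by linarith))
      _ ≤ K₀ / n := mul_exp_neg_two_mul_sq_le_div (by omega) ht₁ htL ht
      _ ≤ (K₀ + N) / n := by gcongr; exact le_add_of_nonneg_right N.cast_nonneg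
  · calc _ ≤ 1 := ENNReal.toReal_le_of_le_ofReal zero_le_one (by simpa using prob_le_one)
      _ ≤ (K₀ + N) / n := by
        rw [le_div_iff₀ hn₀, one_mul]
        linarith [show (n : ℝ) ≤ N by exact_mod_cast hnN.le]
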